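/- arXiv:2209.14938 — 6 statements merged into one kernel-verified Lean document; each statement's English description precedes it below -/
import Mathlib

section
/- Let T be a tree of transitive tournaments (a connected DAG whose skeleton is a block graph) with a unique source. Then for any two distinct nodes i, j, the sets Desc(i) and Desc(j) are either disjoint, or one contains the other (equivalently, i is an ancestor of j or j is an ancestor of i). -/
open scoped Classical

universe u

variable {V : Type u}

/-- The undirected skeleton of a directed graph given by edge relation `E`. -/
def skeleton (E : V → V → Prop) : SimpleGraph V where
  Adj u v := u ≠ v ∧ (E u v ∨ E v u)
  symm := ⟨fun u v h => ⟨h.1.symm, h.2.symm⟩⟩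
  loopless := ⟨fun v h => h.1 rfl⟩

/-- A set of vertices is biconnected if the induced subgraph is connected and
remains connected after removal of any single vertex. -/
def IsBiconnected (G : SimpleGraph V) (S : Set V) : Prop :=
  (G.induce S).Connected ∧ ∀ v ∈ S, (G.induce (S \ {v})).Connected

/-- A block graph: every maximal biconnected set of vertices is a clique. -/
def IsBlockGraph (G : SimpleGraph V) : Prop :=
  ∀ S : Set V, IsBiconnected G S →
    (∀ S', S ⊆ S' → IsBiconnected G S' → S = S') → G.IsClique S

/-- A tree of transitive tournaments: a (finite) directed acyclic graph that is
connected and whose skeleton is a block graph. -/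
def IsTTT (E : V → V → Prop) : Prop :=
  (∀ v, ¬ Relation.TransGen E v v) ∧ (skeleton E).Connected ∧ IsBlockGraph (skeleton E)

/-- `l` is the full vertex sequence of a directed path from `a` to `b`. -/
def IsDirSeq (E : V → V → Prop) (a b : V) (l : List V) : Prop :=
  l.Chain' E ∧ l.head? = some a ∧ l.getLast? = some b

/-- A maximal clique of a simple graph. -/
def IsMaxClique (G : SimpleGraph V) (S : Set V) : Prop :=
  G.IsClique S ∧ ∀ S', G.IsClique S' → S ⊆ S' → S = S'

/-- The product of the edge weights along a vertex sequence. -/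
def prodAlong (c : V → V → ℝ) : List V → ℝ
  | [] => 1
  | [_] => 1
  | a :: b :: rest => c a b * prodAlong c (b :: rest)


/-!
Suppose `i` and `j` have a common descendant `w` but neither reaches the other. Walking
`i → w ← j` through descendants and `i ← s → j` through ancestors of the source `s` gives two
paths in the skeleton that meet only at `i` and `j`, since a common vertex would make `i` and `j`
comparable. Their union is biconnected, so it lies in a maximal biconnected set, which in a block
graph is a clique; hence `i` and `j` are joined by an edge, contradicting incomparability.
-/

namespace SimpleGraph

variable {G : SimpleGraph V}

lemma Walk.IsPath.exists_walk_to_end_avoiding {a b u v : V} {p : G.Walk a b} (hp : p.IsPath)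
    (hu : u ∈ p.support) (hvu : v ≠ u) :
    ∃ e ∈ ({a, b} : Set V), ∃ w : G.Walk u e, ∀ x ∈ w.support, x ∈ p.support ∧ x ≠ v := by
  obtain ⟨q, r, -, -, rfl⟩ := hp.mem_support_iff_exists_append.mp hu
  by_cases hvq : v ∈ q.support
  · refine ⟨b, by simp, r, fun x hx => ⟨(Walk.mem_support_append_iff _ _).2 (Or.inr hx), ?_⟩⟩
    rintro rfl
    exact hp.ne_of_mem_support_of_append hvu hvq hx rfl
  · refine ⟨a, by simp, q.reverse, fun x hx => ?_⟩
    rw [Walk.support_reverse, List.mem_reverse] at hx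
    refine ⟨(Walk.mem_support_append_iff _ _).2 (Or.inl hx), ?_⟩
    rintro rfl
    exact hvq hx

lemma Walk.IsPath.exists_reachable_end_induce_diff {a b u v : V} {s : Set V} {p : G.Walk a b}
    (hp : p.IsPath) (hps : ∀ x ∈ p.support, x ∈ s) (hu : u ∈ s \ {v}) (hup : u ∈ p.support) :
    ∃ e ∈ ({a, b} : Set V), ∃ he : e ∈ s \ {v},
      (G.induce (s \ {v})).Reachable ⟨u, hu⟩ ⟨e, he⟩ := by
  obtain ⟨e, he, w, hw⟩ := hp.exists_walk_to_end_avoiding hup (Ne.symm hu.2)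
  have hws : ∀ x ∈ w.support, x ∈ s \ {v} := fun x hx => ⟨hps x (hw x hx).1, (hw x hx).2⟩
  exact ⟨e, he, hws e w.end_mem_support, ⟨w.induce _ hws⟩⟩

theorem isBiconnected_union_support_of_isPath {i j : V} (hij : i ≠ j) {p q : G.Walk i j}
    (hp : p.IsPath) (hq : q.IsPath) (hpq : ∀ x ∈ p.support, x ∈ q.support → x = i ∨ x = j) :
    IsBiconnected G ({x | x ∈ p.support} ∪ {x | x ∈ q.support}) := by
  refine ⟨induce_union_connected p.connected_induce_support.preconnected
    q.connected_induce_support.preconnected ⟨i, p.start_mem_support, q.start_mem_support⟩, ?_⟩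
  rintro v -
  set T := ({x | x ∈ p.support} ∪ {x | x ∈ q.support}) \ {v}
  have reach_end : ∀ u (hu : u ∈ T), ∃ e ∈ ({i, j} : Set V), ∃ he : e ∈ T,
      (G.induce T).Reachable ⟨u, hu⟩ ⟨e, he⟩ := by
    rintro u hu
    rcases hu.1 with hup | huq
    · exact hp.exists_reachable_end_induce_diff (fun x hx => Or.inl hx) hu hup
    · exact hq.exists_reachable_end_induce_diff (fun x hx => Or.inr hx) hu huq
  have reach_ij : ∀ (hi : i ∈ T) (hj : j ∈ T), (G.induce T).Reachable ⟨i, hi⟩ ⟨j, hj⟩ := by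
    intro hi hj
    have hvi : v ≠ i := Ne.symm hi.2
    have hvj : v ≠ j := Ne.symm hj.2
    by_cases hvp : v ∈ p.support
    · have hvq : v ∉ q.support := fun hvq => (hpq v hvp hvq).elim hvi hvj
      exact ⟨q.induce T fun x hx => ⟨Or.inr hx, fun hxv => hvq (hxv ▸ hx)⟩⟩
    · exact ⟨p.induce T fun x hx => ⟨Or.inl hx, fun hxv => hvp (hxv ▸ hx)⟩⟩
  rw [connected_iff]
  refine ⟨?_, ?_⟩
  · rintro ⟨x, hx⟩ ⟨y, hy⟩
    obtain ⟨e, he, heT, hxe⟩ := reach_end x hx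
    obtain ⟨f, hf, hfT, hyf⟩ := reach_end y hy
    have hef : (G.induce T).Reachable ⟨e, heT⟩ ⟨f, hfT⟩ := by
      rcases he with rfl | rfl <;> rcases hf with rfl | rfl
      · rfl
      · exact reach_ij heT hfT
      · exact (reach_ij hfT heT).symm
      · rfl
    exact hxe.trans (hef.trans hyf.symm)
  · by_cases hvi : v = i
    · exact ⟨⟨j, Or.inl p.end_mem_support, fun hjv => hij (hvi ▸ hjv).symm⟩⟩
    · exact ⟨⟨i, Or.inl p.start_mem_support, fun hiv => hvi hiv.symm⟩⟩

theorem _root_.IsBlockGraph.adj_of_isPath [Finite V] (hG : IsBlockGraph G) {i j : V} (hij : i ≠ j)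
    {p q : G.Walk i j} (hp : p.IsPath) (hq : q.IsPath)
    (hpq : ∀ x ∈ p.support, x ∈ q.support → x = i ∨ x = j) : G.Adj i j := by
  obtain ⟨B, hSB, hB⟩ := Finite.exists_le_maximal (p := IsBiconnected G)
    (isBiconnected_union_support_of_isPath hij hp hq hpq)
  exact hG B hB.prop (fun S hBS hS => hB.eq_of_subset hS hBS)
    (hSB (Or.inl p.start_mem_support)) (hSB (Or.inl p.end_mem_support)) hij

end SimpleGraph

section Acyclic

open Relation

variable {E : V → V → Prop}

lemma reflTransGen_antisymm (hac : ∀ v, ¬ TransGen E v v) {a b : V}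
    (hab : ReflTransGen E a b) (hba : ReflTransGen E b a) : a = b := by
  rcases hab.cases_head with h | ⟨c, hE, hcb⟩
  · exact h
  · exact (hac b (TransGen.trans_right hba (TransGen.head' hE hcb))).elim

lemma exists_source_reflTransGen [Finite V] (hac : ∀ v, ¬ TransGen E v v) (v : V) :
    ∃ u, (∀ w, ¬ E w u) ∧ ReflTransGen E u v := by
  have : IsTrans V (TransGen E) := ⟨fun _ _ _ => TransGen.trans⟩
  have : Std.Irrefl (TransGen E) := ⟨hac⟩
  induction v using (Finite.wellFounded_of_trans_of_irrefl (TransGen E)).induction with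
  | _ x ih =>
    by_cases h : ∃ y, E y x
    · obtain ⟨y, hyx⟩ := h
      obtain ⟨u, hu, huy⟩ := ih y (.single hyx)
      exact ⟨u, hu, huy.tail hyx⟩
    · exact ⟨x, not_exists.mp h, .refl⟩

lemma Relation.ReflTransGen.exists_skeleton_walk (hirr : ∀ v, ¬ E v v) {a b : V}
    (h : ReflTransGen E a b) :
    ∃ p : (skeleton E).Walk a b, ∀ x ∈ p.support, ReflTransGen E a x ∧ ReflTransGen E x b := by
  induction h using ReflTransGen.head_induction_on with
  | refl =>
    refine ⟨.nil, fun x hx => ?_⟩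
    rw [SimpleGraph.Walk.support_nil, List.mem_singleton] at hx
    exact hx ▸ ⟨.refl, .refl⟩
  | @head a c hE hcb ih =>
    obtain ⟨p, hp⟩ := ih
    have hadj : (skeleton E).Adj a c := ⟨fun h => hirr a (h ▸ hE), Or.inl hE⟩
    refine ⟨.cons hadj p, fun x hx => ?_⟩
    rcases (SimpleGraph.Walk.mem_support_iff _).1 hx with rfl | hx
    · exact ⟨.refl, .head hE hcb⟩
    · exact ⟨.head hE (hp x hx).1, (hp x hx).2⟩

theorem reflTransGen_total_of_common_bounds [Finite V] (hac : ∀ v, ¬ TransGen E v v)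
    (hblock : IsBlockGraph (skeleton E)) {s i j w : V} (hsi : ReflTransGen E s i)
    (hsj : ReflTransGen E s j) (hiw : ReflTransGen E i w) (hjw : ReflTransGen E j w) :
    ReflTransGen E i j ∨ ReflTransGen E j i := by
  by_contra! hcon
  obtain ⟨hij, hji⟩ := hcon
  have hirr : ∀ v, ¬ E v v := fun v h => hac v (.single h)
  obtain ⟨pA, hpA⟩ := hiw.exists_skeleton_walk hirr
  obtain ⟨pB, hpB⟩ := hjw.exists_skeleton_walk hirr
  obtain ⟨pC, hpC⟩ := hsi.exists_skeleton_walk hirr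
  obtain ⟨pD, hpD⟩ := hsj.exists_skeleton_walk hirr
  -- one path from `i` to `j` through common descendants, one through common ancestors
  let p := (pA.append pB.reverse).bypass
  let q := (pC.reverse.append pD).bypass
  have hp : ∀ x ∈ p.support, ReflTransGen E i x ∨ ReflTransGen E j x := by
    intro x hx
    rcases (SimpleGraph.Walk.mem_support_append_iff _ _).1
      (SimpleGraph.Walk.support_bypass_subset_support _ hx) with h | h
    · exact Or.inl (hpA x h).1
    · exact Or.inr (hpB x (by simpa using h)).1
  have hq : ∀ x ∈ q.support, ReflTransGen E x i ∨ ReflTransGen E x j := by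
    intro x hx
    rcases (SimpleGraph.Walk.mem_support_append_iff _ _).1
      (SimpleGraph.Walk.support_bypass_subset_support _ hx) with h | h
    · exact Or.inl (hpC x (by simpa using h)).2
    · exact Or.inr (hpD x h).2
  have hpq : ∀ x ∈ p.support, x ∈ q.support → x = i ∨ x = j := by
    intro x hxp hxq
    rcases hp x hxp with hix | hjx <;> rcases hq x hxq with hxi | hxj
    · exact Or.inl (reflTransGen_antisymm hac hix hxi).symm
    · exact (hij (hix.trans hxj)).elim
    · exact (hji (hjx.trans hxi)).elim
    · exact Or.inr (reflTransGen_antisymm hac hjx hxj).symm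
  have hne : i ≠ j := by rintro rfl; exact hij .refl
  rcases (hblock.adj_of_isPath hne (SimpleGraph.Walk.bypass_isPath _)
    (SimpleGraph.Walk.bypass_isPath _) hpq).2 with h | h
  · exact hij (.single h)
  · exact hji (.single h)

end Acyclic

/-- In a ttt with unique source, closed descendant sets of distinct nodes are
either disjoint or nested. -/
theorem stmt6 {V : Type u} [Fintype V] (E : V → V → Prop)
    (httt : IsTTT E) (hsrc : ∃! u : V, ∀ w, ¬ E w u) :
    ∀ i j : V, i ≠ j →
      Disjoint {w | Relation.ReflTransGen E i w} {w | Relation.ReflTransGen E j w} ∨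
      {w | Relation.ReflTransGen E i w} ⊆ {w | Relation.ReflTransGen E j w} ∨
      {w | Relation.ReflTransGen E j w} ⊆ {w | Relation.ReflTransGen E i w} := by
  intro i j _
  obtain ⟨hac, -, hblock⟩ := httt
  obtain ⟨s, -, hs_unique⟩ := hsrc
  have hs : ∀ v, Relation.ReflTransGen E s v := fun v => by
    obtain ⟨u, hu, huv⟩ := exists_source_reflTransGen hac v
    rwa [hs_unique u hu] at huv
  rw [or_iff_not_imp_left, Set.not_disjoint_iff]
  rintro ⟨w, hiw, hjw⟩
  rcases reflTransGen_total_of_common_bounds hac hblock (hs i) (hs j) hiw hjw with h | h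
  · exact Or.inr fun x hx => h.trans hx
  · exact Or.inl fun x hx => h.trans hx
end

section
/- A tree of transitive tournaments has a unique source if and only if it contains no v-structure, i.e., no node having two non-adjacent parents. -/
/-!
Every vertex of a finite DAG lies below a source. If two parents `a, b` of `v` lie below a
common source, the skeleton has a walk from `a` to `b` through their ancestors, which avoids `v`;
closing it up through `v` gives a cycle, whose vertex set is biconnected and hence a clique in a
block graph. Conversely, without v-structures a shortest skeleton walk between two sources can
always be shortened, so two sources in the same component coincide.
-/

open scoped Classical

universe u

variable {V : Type u}

open SimpleGraph

section BlockGraph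

variable {G : SimpleGraph V}

lemma SimpleGraph.connected_induce_of_forall_walk {T : Set V} {c : V} (hc : c ∈ T)
    (h : ∀ x ∈ T, ∃ q : G.Walk c x, ∀ z ∈ q.support, z ∈ T) : (G.induce T).Connected :=
  (connected_iff_exists_forall_reachable _).mpr ⟨⟨c, hc⟩, fun ⟨x, hx⟩ =>
    let ⟨q, hq⟩ := h x hx; ⟨q.induce T hq⟩⟩

lemma SimpleGraph.Walk.IsPath.notMem_takeUntil_or_notMem_dropUntil {a b x w : V}
    {p : G.Walk a b} (hp : p.IsPath) (hx : x ∈ p.support) (hwx : w ≠ x) :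
    w ∉ (p.takeUntil x hx).support ∨ w ∉ (p.dropUntil x hx).support := by
  by_contra! h
  have hnodup : ((p.takeUntil x hx).support ++ (p.dropUntil x hx).support.tail).Nodup := by
    rw [← Walk.support_append, p.take_spec hx]
    exact hp.support_nodup
  have htail : w ∈ (p.dropUntil x hx).support.tail := by
    have h2 := h.2
    rw [← Walk.cons_tail_support, List.mem_cons] at h2
    exact h2.resolve_left hwx
  exact List.disjoint_of_nodup_append hnodup h.1 htail

/-- The set is the vertex set of the cycle `v, a, …, b, v`. -/
lemma isBiconnected_insert_support {a b v : V} (hav : G.Adj a v) (hbv : G.Adj b v)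
    {p : G.Walk a b} (hp : p.IsPath) (hvp : v ∉ p.support) :
    IsBiconnected G (insert v {x | x ∈ p.support}) := by
  set S : Set V := insert v {x | x ∈ p.support}
  have hvS : v ∈ S := Set.mem_insert _ _
  have hpS : ∀ z ∈ p.support, z ∈ S := fun z hz => Set.mem_insert_of_mem _ hz
  refine ⟨connected_induce_of_forall_walk hvS fun x hx => ?_, fun w hw => ?_⟩
  · rcases hx with rfl | hx
    · exact ⟨.nil, by simp [hvS]⟩
    · refine ⟨.cons hav.symm (p.takeUntil x hx), fun z hz => ?_⟩
      rcases List.mem_cons.mp (Walk.support_cons _ _ ▸ hz) with rfl | hz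
      · exact hvS
      · exact hpS z (p.support_takeUntil_subset_support hx hz)
  by_cases hwv : w = v
  · subst hwv
    have haS : a ∈ S \ {w} := ⟨hpS a p.start_mem_support, fun h => hvp (h ▸ p.start_mem_support)⟩
    refine connected_induce_of_forall_walk haS fun x hx => ?_
    have hxp : x ∈ p.support := hx.1.resolve_left hx.2
    refine ⟨p.takeUntil x hxp, fun z hz => ?_⟩
    have hzp := p.support_takeUntil_subset_support hxp hz
    exact ⟨hpS z hzp, fun h => hvp (h ▸ hzp)⟩
  have hvS' : v ∈ S \ {w} := ⟨hvS, Ne.symm hwv⟩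
  refine connected_induce_of_forall_walk hvS' fun x hx => ?_
  rcases hx with ⟨rfl | hxp, hxw⟩
  · exact ⟨.nil, by simpa using hvS'⟩
  -- one of the two arcs of the cycle from `v` to `x` avoids `w`
  rcases hp.notMem_takeUntil_or_notMem_dropUntil hxp (Ne.symm hxw) with hw' | hw'
  · refine ⟨.cons hav.symm (p.takeUntil x hxp), fun z hz => ?_⟩
    rcases List.mem_cons.mp (Walk.support_cons _ _ ▸ hz) with rfl | hz
    · exact hvS'
    · exact ⟨hpS z (p.support_takeUntil_subset_support hxp hz), fun h => hw' (h ▸ hz)⟩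
  · refine ⟨.cons hbv.symm (p.dropUntil x hxp).reverse, fun z hz => ?_⟩
    rw [Walk.support_cons, Walk.support_reverse, List.mem_cons, List.mem_reverse] at hz
    rcases hz with rfl | hz
    · exact hvS'
    · exact ⟨hpS z (p.support_dropUntil_subset_support hxp hz), fun h => hw' (h ▸ hz)⟩

lemma IsBlockGraph.isClique_of_isBiconnected [Finite V] (hG : IsBlockGraph G) {S : Set V}
    (hS : IsBiconnected G S) : G.IsClique S := by
  obtain ⟨M, ⟨hSM, hM⟩, hmax⟩ := Set.Finite.exists_maximalFor id
    {T : Set V | S ⊆ T ∧ IsBiconnected G T} (Set.toFinite _) ⟨S, subset_rfl, hS⟩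
  exact (hG M hM fun T hMT hT => hMT.antisymm (hmax ⟨hSM.trans hMT, hT⟩ hMT)).subset hSM

lemma IsBlockGraph.adj_of_walk_avoiding [Finite V] (hG : IsBlockGraph G) {a b v : V}
    (hav : G.Adj a v) (hbv : G.Adj b v) (hab : a ≠ b) (p : G.Walk a b) (hvp : v ∉ p.support) :
    G.Adj a b :=
  hG.isClique_of_isBiconnected
    (isBiconnected_insert_support hav hbv p.bypass_isPath
      fun h => hvp (p.support_bypass_subset_support h))
    (Set.mem_insert_of_mem _ p.bypass.start_mem_support)
    (Set.mem_insert_of_mem _ p.bypass.end_mem_support) hab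

end BlockGraph

def IsSource (E : V → V → Prop) (u : V) : Prop :=
  ∀ w, ¬ E w u

section Dag

variable {E : V → V → Prop}

lemma skeleton_adj_of_rel (hirr : ∀ v, ¬ E v v) {a b : V} (h : E a b) : (skeleton E).Adj a b :=
  ⟨fun hab => hirr a (hab ▸ h), Or.inl h⟩

lemma exists_isSource_reflTransGen [Finite V] (hac : ∀ v, ¬ Relation.TransGen E v v) (a : V) :
    ∃ u, IsSource E u ∧ Relation.ReflTransGen E u a := by
  have : IsTrans V (Relation.TransGen E) := ⟨fun _ _ _ => Relation.TransGen.trans⟩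
  have : Std.Irrefl (Relation.TransGen E) := ⟨hac⟩
  obtain ⟨u, hua, hmin⟩ := (Finite.wellFounded_of_trans_of_irrefl (Relation.TransGen E)).has_min
    {x | Relation.ReflTransGen E x a} ⟨a, .refl⟩
  exact ⟨u, fun w hwu => hmin w (hua.head hwu) (.single hwu), hua⟩

lemma exists_walk_of_reflTransGen (hirr : ∀ v, ¬ E v v) {u a : V}
    (h : Relation.ReflTransGen E u a) :
    ∃ p : (skeleton E).Walk u a, ∀ x ∈ p.support, Relation.ReflTransGen E x a := by
  induction h using Relation.ReflTransGen.head_induction_on with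
  | refl => exact ⟨.nil, by simp [Relation.ReflTransGen.refl]⟩
  | @head y z hyz hza ih =>
    obtain ⟨p, hp⟩ := ih
    refine ⟨.cons (skeleton_adj_of_rel hirr hyz) p, fun x hx => ?_⟩
    rcases List.mem_cons.mp (Walk.support_cons _ _ ▸ hx) with rfl | hx
    · exact hza.head hyz
    · exact hp x hx

lemma skeleton_adj_of_common_ancestor [Finite V] (hac : ∀ v, ¬ Relation.TransGen E v v)
    (hbg : IsBlockGraph (skeleton E)) {u v a b : V} (hua : Relation.ReflTransGen E u a)
    (hub : Relation.ReflTransGen E u b) (hav : E a v) (hbv : E b v) (hab : a ≠ b) :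
    (skeleton E).Adj a b := by
  have hirr : ∀ v, ¬ E v v := fun x hx => hac x (.single hx)
  obtain ⟨pa, hpa⟩ := exists_walk_of_reflTransGen hirr hua
  obtain ⟨pb, hpb⟩ := exists_walk_of_reflTransGen hirr hub
  have hv : v ∉ (pa.reverse.append pb).support := by
    rw [Walk.mem_support_append_iff, Walk.support_reverse, List.mem_reverse]
    rintro (hv | hv)
    · exact hac v (.tail' (hpa v hv) hav)
    · exact hac v (.tail' (hpb v hv) hbv)
  exact hbg.adj_of_walk_avoiding (skeleton_adj_of_rel hirr hav) (skeleton_adj_of_rel hirr hbv)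
    hab _ hv

/-- Without v-structures, a walk that enters `z` towards a source `t` can be shortened to
start at any parent `y` of `z`: at the first backward edge `z ← z'`, the vertices `y` and `z'`
are both parents of `z`, hence adjacent. -/
lemma exists_walk_length_le_of_parent (hirr : ∀ v, ¬ E v v)
    (hpar : ∀ ⦃v a b⦄, E a v → E b v → a ≠ b → E a b ∨ E b a) {t : V} (ht : IsSource E t) :
    ∀ {z : V} (q : (skeleton E).Walk z t) {y : V}, E y z →
      ∃ p : (skeleton E).Walk y t, p.length ≤ q.length
  | _, .nil, _, hyt => (ht _ hyt).elim
  | _, .cons (v := z') hzz' r, y, hyz => by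
    rcases hzz'.2 with hf | hb
    · obtain ⟨p, hp⟩ := exists_walk_length_le_of_parent hirr hpar ht r hf
      exact ⟨.cons (skeleton_adj_of_rel hirr hyz) p, by simpa using hp⟩
    · by_cases hyz' : y = z'
      · subst hyz'
        exact ⟨r, by simp⟩
      · exact ⟨.cons ⟨hyz', hpar hyz hb hyz'⟩ r, le_rfl⟩

lemma eq_of_isSource_of_reachable (hirr : ∀ v, ¬ E v v)
    (hpar : ∀ ⦃v a b⦄, E a v → E b v → a ≠ b → E a b ∨ E b a) {u₁ u₂ : V}
    (h₁ : IsSource E u₁) (h₂ : IsSource E u₂) (hr : (skeleton E).Reachable u₁ u₂) : u₁ = u₂ := by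
  obtain ⟨p, hp⟩ := hr.exists_walk_length_eq_dist
  cases p with
  | nil => rfl
  | cons hadj q =>
    obtain ⟨p', hp'⟩ := exists_walk_length_le_of_parent hirr hpar h₂ q
      (hadj.2.resolve_right (h₁ _))
    have := dist_le p'
    simp only [Walk.length_cons] at hp
    omega

end Dag

/-- A ttt has a unique source iff it contains no v-structure
(no node with two non-adjacent parents). -/
theorem stmt7 {V : Type u} [Fintype V] (E : V → V → Prop)
    (httt : IsTTT E) :
    (∃! u : V, ∀ w, ¬ E w u) ↔
      ¬ ∃ v a b : V, a ≠ b ∧ E a v ∧ E b v ∧ ¬ E a b ∧ ¬ E b a := by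
  obtain ⟨hac, hconn, hbg⟩ := httt
  have hirr : ∀ v, ¬ E v v := fun v hv => hac v (.single hv)
  constructor
  · rintro ⟨u, -, huniq⟩ ⟨v, a, b, hab, hav, hbv, hnab, hnba⟩
    obtain ⟨ua, hua, hra⟩ := exists_isSource_reflTransGen hac a
    obtain ⟨ub, hub, hrb⟩ := exists_isSource_reflTransGen hac b
    rw [huniq ua hua] at hra
    rw [huniq ub hub] at hrb
    exact (skeleton_adj_of_common_ancestor hac hbg hra hrb hav hbv hab).2.elim hnab hnba
  · intro hnv
    have hpar : ∀ ⦃v a b⦄, E a v → E b v → a ≠ b → E a b ∨ E b a := by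
      intro v a b hav hbv hab
      by_contra! h
      exact hnv ⟨v, a, b, hab, hav, hbv, h⟩
    obtain ⟨v⟩ := hconn.nonempty
    obtain ⟨u, hu, -⟩ := exists_isSource_reflTransGen hac v
    exact ⟨u, hu, fun y hy => eq_of_isSource_of_reachable hirr hpar hy hu (hconn y u)⟩
end

section
/- In a tree of transitive tournaments, if there exists a directed path from node a to node b, then there is a unique shortest directed path from a to b. -/
open scoped Classical

universe u

variable {V : Type u}

/-!
Let two shortest paths from `a` to `b` leave `a` along different edges, and let `y` be the first
vertex of the first path that also lies on the second. The two segments from `a` to `y` have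
disjoint interiors, so together they form a cycle in the skeleton. A cycle is biconnected, hence
lies in a maximal biconnected set, which is a clique; so `a` and `y` are adjacent, and acyclicity
orients the edge as `a → y`. This edge shortcuts both paths, so minimality forces `y` to be the
second vertex of each. Uniqueness follows by induction along the paths.
-/

open Relation

theorem List.IsChain.pairwise_transGen {α : Type*} {r : α → α → Prop} {l : List α}
    (h : l.IsChain r) : l.Pairwise (TransGen r) :=
  (h.imp fun _ _ => TransGen.single).pairwise

theorem List.exists_eq_append_first {α : Type*} {p : α → Prop} {l : List α}
    (h : ∃ x ∈ l, p x) : ∃ s y r, l = s ++ y :: r ∧ p y ∧ ∀ w ∈ s, ¬ p w := by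
  obtain ⟨y, hy⟩ := Option.isSome_iff_exists.1
    (List.find?_isSome (p := fun x => decide (p x)).2 (by simpa using h))
  obtain ⟨hpy, s, r, rfl, hs⟩ := List.find?_eq_some_iff_append.1 hy
  exact ⟨s, y, r, rfl, by simpa using hpy, fun w hw => by simpa using hs w hw⟩

theorem List.setOf_mem_append_swap {α : Type*} {p q : List α} {w : α}
    (h : (p ++ w :: q).Nodup) : {x | x ∈ q ++ p} = {x | x ∈ p ++ w :: q} \ {w} := by
  have hwp : w ∉ p := fun hw => List.disjoint_of_nodup_append h hw List.mem_cons_self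
  have hwq : w ∉ q := (List.nodup_cons.1 (List.nodup_append.1 h).2.1).1
  ext x
  simp only [Set.mem_ofPred_eq, Set.mem_sdiff, Set.mem_singleton_iff, List.mem_append,
    List.mem_cons]
  constructor
  · rintro (hx | hx) <;> refine ⟨by tauto, ?_⟩ <;> rintro rfl <;> contradiction
  · tauto

namespace SimpleGraph

variable {G : SimpleGraph V}

theorem connected_induce_of_isChain : ∀ {l : List V}, l ≠ [] → l.IsChain G.Adj →
    (G.induce {v | v ∈ l}).Connected
  | [u], _, _ => by
    rw [show {v | v ∈ [u]} = {u} by ext; simp, induce_singleton_eq_top]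
    exact connected_top
  | u :: w :: l, _, h => by
    have hwl := connected_induce_of_isChain (List.cons_ne_nil w l) (List.isChain_cons_cons.1 h).2
    have hu : (G.induce {u}).Connected := by
      rw [induce_singleton_eq_top]; exact connected_top
    rw [show {v | v ∈ u :: w :: l} = {u} ∪ {v | v ∈ w :: l} by ext; simp]
    exact connected_induce_union hu.preconnected hwl.preconnected rfl List.mem_cons_self
      (List.isChain_cons_cons.1 h).1

theorem isBiconnected_of_isChain_cycle {v : V} {c : List V} (hnd : (v :: c).Nodup)
    (hc : c ≠ []) (h : (v :: c ++ [v]).IsChain G.Adj) : IsBiconnected G {w | w ∈ v :: c} := by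
  refine ⟨connected_induce_of_isChain (List.cons_ne_nil _ _) (h.prefix ⟨[v], rfl⟩),
    fun w hw => ?_⟩
  obtain ⟨p, q, hpq⟩ := List.append_of_mem hw
  -- deleting `w` from the cycle `p ++ w :: q` leaves the path `q ++ p`
  rw [hpq] at hnd ⊢
  rw [← List.setOf_mem_append_swap hnd]
  rcases p with _ | ⟨u, p⟩
  · obtain ⟨rfl, rfl⟩ := List.cons_eq_cons.1 hpq
    exact connected_induce_of_isChain (by simpa using hc)
      (by simpa using h.infix ⟨[v], [v], rfl⟩)
  · obtain ⟨rfl, rfl⟩ := List.cons_eq_cons.1 hpq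
    have hq : (q ++ [v]).IsChain G.Adj := h.infix ⟨v :: p ++ [w], [], by simp⟩
    have hp : ([v] ++ p).IsChain G.Adj := h.infix ⟨[], w :: q ++ [v], by simp⟩
    exact connected_induce_of_isChain (by simp)
      (by simpa using hq.append_overlap hp (List.cons_ne_nil _ _))

end SimpleGraph

theorem IsBlockGraph.adj_of_mem_isBiconnected [Finite V] {G : SimpleGraph V}
    (hG : IsBlockGraph G) {S : Set V} (hS : IsBiconnected G S) {x y : V} (hx : x ∈ S)
    (hy : y ∈ S) (hxy : x ≠ y) : G.Adj x y := by
  obtain ⟨T, hST, hT⟩ := Finite.exists_le_maximal (p := IsBiconnected G) hS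
  exact hG T hT.prop (fun S' hTS' hS' => hT.eq_of_le hS' hTS') (hST hx) (hST hy) hxy

section Acyclic

variable {E : V → V → Prop}

theorem List.IsChain.nodup_of_acyclic (hacy : ∀ v, ¬ TransGen E v v) {l : List V}
    (h : l.IsChain E) : l.Nodup :=
  haveI : Std.Irrefl (TransGen E) := ⟨hacy⟩
  h.pairwise_transGen.nodup

theorem skeleton_adj_of_acyclic (hacy : ∀ v, ¬ TransGen E v v) {u v : V} (h : E u v) :
    (skeleton E).Adj u v :=
  ⟨by rintro rfl; exact hacy u (.single h), .inl h⟩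

theorem rel_of_disjoint_dirPaths [Finite V] (hacy : ∀ v, ¬ TransGen E v v)
    (hbg : IsBlockGraph (skeleton E)) {x y : V} {s t : List V}
    (hs : (x :: s ++ [y]).IsChain E) (ht : (x :: t ++ [y]).IsChain E)
    (hst : ∀ w ∈ s, w ∉ t) : E x y := by
  have hs_nd := hs.nodup_of_acyclic hacy
  have ht_nd := ht.nodup_of_acyclic hacy
  have hnd : (x :: (s ++ y :: t.reverse)).Nodup := by
    simp only [List.nodup_cons, List.nodup_append, List.mem_append, List.mem_cons,
      List.mem_reverse, List.nodup_reverse, List.not_mem_nil] at hs_nd ht_nd ⊢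
    grind
  have hcyc : (x :: (s ++ y :: t.reverse) ++ [x]).IsChain (skeleton E).Adj := by
    have hs' := hs.imp fun _ _ => skeleton_adj_of_acyclic hacy
    have ht' : ([y] ++ (t.reverse ++ [x])).IsChain (skeleton E).Adj := by
      simpa using List.isChain_reverse.2
        (ht.imp fun _ _ h => (skeleton_adj_of_acyclic hacy h).symm)
    simpa using hs'.append_overlap ht' (List.cons_ne_nil _ _)
  have hxy : x ≠ y := fun h => (List.nodup_cons.1 hnd).1 (by simp [h])
  have hadj := hbg.adj_of_mem_isBiconnected
    (SimpleGraph.isBiconnected_of_isChain_cycle hnd (by simp) hcyc) (by simp) (by simp) hxy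
  refine hadj.2.resolve_right fun hyx => hacy x (.tail ?_ hyx)
  exact (List.pairwise_cons.1 hs.pairwise_transGen).1 y (by simp)

end Acyclic

section ShortestPaths

variable {E : V → V → Prop}

def IsShortestDirSeq (E : V → V → Prop) (a b : V) (l : List V) : Prop :=
  IsDirSeq E a b l ∧ ∀ l' : List V, IsDirSeq E a b l' → l.length ≤ l'.length

theorem exists_isShortestDirSeq {a b : V} (h : ∃ l, IsDirSeq E a b l) :
    ∃ l, IsShortestDirSeq E a b l := by
  obtain ⟨l, hl, hmin⟩ := (measure List.length).wf.has_min {l | IsDirSeq E a b l} h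
  exact ⟨l, hl, fun l' hl' => not_lt.1 (hmin l' hl')⟩

theorem IsDirSeq.eq_cons {a b : V} {l : List V} (h : IsDirSeq E a b l) : ∃ r, l = a :: r := by
  obtain ⟨_, hhead, -⟩ := h
  rcases l with _ | ⟨u, r⟩
  · simp at hhead
  · exact ⟨r, by simpa using hhead⟩

theorem isDirSeq_cons_cons_iff {a b c : V} {r : List V} :
    IsDirSeq E a b (a :: c :: r) ↔ E a c ∧ IsDirSeq E c b (c :: r) :=
  ⟨fun ⟨hch, _, hb⟩ =>
      ⟨(List.isChain_cons_cons.1 hch).1, (List.isChain_cons_cons.1 hch).2, rfl, hb⟩,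
    fun ⟨hac, hch, _, hb⟩ => ⟨List.isChain_cons_cons.2 ⟨hac, hch⟩, rfl, hb⟩⟩

theorem IsDirSeq.suffix {a b y : V} {p r : List V} (h : IsDirSeq E a b (p ++ y :: r)) :
    IsDirSeq E y b (y :: r) :=
  ⟨h.1.suffix ⟨p, rfl⟩, rfl, by simpa [List.getLast?_append_cons] using h.2.2⟩

theorem IsDirSeq.mem_tail {a b : V} {r : List V} (h : IsDirSeq E a b (a :: r)) (hab : a ≠ b) :
    b ∈ r := by
  rcases r with _ | ⟨u, r⟩
  · exact absurd (by simpa [IsDirSeq] using h.2.2) hab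
  · exact List.mem_of_getLast? (by simpa [List.getLast?_cons_cons] using h.2.2)

theorem IsShortestDirSeq.tail {a b c : V} {r : List V}
    (h : IsShortestDirSeq E a b (a :: c :: r)) : IsShortestDirSeq E c b (c :: r) := by
  obtain ⟨hac, hcr⟩ := isDirSeq_cons_cons_iff.1 h.1
  refine ⟨hcr, fun l' hl' => ?_⟩
  obtain ⟨r', rfl⟩ := hl'.eq_cons
  simpa using h.2 _ (isDirSeq_cons_cons_iff.2 ⟨hac, hl'⟩)

theorem IsShortestDirSeq.eq_singleton {a : V} {l : List V} (h : IsShortestDirSeq E a a l) :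
    l = [a] := by
  obtain ⟨r, rfl⟩ := h.1.eq_cons
  have := h.2 [a] ⟨List.isChain_singleton a, rfl, rfl⟩
  simp_all

theorem IsShortestDirSeq.head?_tail_eq [Finite V] (hacy : ∀ v, ¬ TransGen E v v)
    (hbg : IsBlockGraph (skeleton E)) {a b : V} {r r' : List V}
    (h : IsShortestDirSeq E a b (a :: r)) (h' : IsShortestDirSeq E a b (a :: r')) :
    r.head? = r'.head? := by
  by_cases hab : a = b
  · subst hab
    simp [List.cons_eq_cons.1 h.eq_singleton, List.cons_eq_cons.1 h'.eq_singleton]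
  obtain ⟨s, y, r₂, rfl, hy, hs⟩ :=
    List.exists_eq_append_first ⟨b, h.1.mem_tail hab, h'.1.mem_tail hab⟩
  obtain ⟨t, r₂', rfl⟩ := List.append_of_mem hy
  have hay : E a y := rel_of_disjoint_dirPaths hacy hbg (h.1.1.prefix ⟨r₂, by simp⟩)
    (h'.1.1.prefix (l₁ := a :: t ++ [y]) ⟨r₂', by simp⟩)
    fun w hw hwt => hs w hw (by simp [hwt])
  have hs_nil : s = [] := by
    simpa using h.2 _ (isDirSeq_cons_cons_iff.2 ⟨hay, h.1.suffix (p := a :: s)⟩)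
  have ht_nil : t = [] := by
    simpa using h'.2 _ (isDirSeq_cons_cons_iff.2 ⟨hay, h'.1.suffix (p := a :: t)⟩)
  simp [hs_nil, ht_nil]

theorem IsShortestDirSeq.eq [Finite V] (hacy : ∀ v, ¬ TransGen E v v)
    (hbg : IsBlockGraph (skeleton E)) {a b : V} {l l' : List V}
    (h : IsShortestDirSeq E a b l) (h' : IsShortestDirSeq E a b l') : l = l' := by
  induction l generalizing a l' with
  | nil => simpa using h.1.eq_cons
  | cons u r ih =>
    obtain rfl : u = a := by simpa using h.1.eq_cons
    obtain ⟨r', rfl⟩ := h'.1.eq_cons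
    have hhead := h.head?_tail_eq hacy hbg h'
    rcases r with _ | ⟨c, r⟩ <;> rcases r' with _ | ⟨c', r'⟩
    · rfl
    · simp at hhead
    · simp at hhead
    · obtain rfl : c = c' := by simpa using hhead
      rw [ih h.tail h'.tail]

end ShortestPaths

theorem stmt8_general {V : Type u} [Fintype V] (E : V → V → Prop)
    (httt : IsTTT E) (a b : V)
    (hex : ∃ l : List V, IsDirSeq E a b l) :
    ∃! l : List V, IsDirSeq E a b l ∧
      ∀ l' : List V, IsDirSeq E a b l' → l.length ≤ l'.length := by
  obtain ⟨hacy, -, hbg⟩ := httt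
  obtain ⟨l, hl⟩ := exists_isShortestDirSeq hex
  exact ⟨l, hl, fun l' hl' => IsShortestDirSeq.eq hacy hbg hl' hl⟩

/-- In a ttt, if there is a directed path between two distinct nodes, there is a
unique shortest directed path between them. -/
theorem stmt8 {V : Type u} [Fintype V] (E : V → V → Prop)
    (httt : IsTTT E) (a b : V) (hab : a ≠ b)
    (hex : ∃ l : List V, IsDirSeq E a b l) :
    ∃! l : List V, IsDirSeq E a b l ∧
      ∀ l' : List V, IsDirSeq E a b l' → l.length ≤ l'.length :=
  stmt8_general E httt a b hex
end

section
/- In a block graph (a connected undirected graph each of whose maximal biconnected subgraphs is a complete graph), between every pair of distinct vertices there is a unique shortest path. -/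
open scoped Classical

universe u

variable {V : Type u}

/-!
A cycle stays connected after deleting any one vertex, so in a finite block graph the vertex set
of every cycle lies in a block and is a clique. Two distinct shortest `u`–`v` paths contain a
cycle made of two shortest `a`–`b` paths (`Walk.IsPath.exists_isCycle_of_ne`); as `a` and `b`
lie on a clique, `dist a b ≤ 1`, so that cycle would have length at most two.
-/

namespace SimpleGraph

variable {G : SimpleGraph V} {u v : V}

lemma induce_connected_of_forall_walk {s : Set V} (hu : u ∈ s)
    (h : ∀ v ∈ s, ∃ p : G.Walk u v, {y | y ∈ p.support} ⊆ s) : (G.induce s).Connected :=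
  G.induce_connected_of_patches u hu fun hv =>
    let ⟨p, hps⟩ := h _ hv
    ⟨_, hps, p.start_mem_support, p.end_mem_support,
      p.connected_induce_support.preconnected _ _⟩

lemma Walk.IsPath.connected_induce_support_diff_end {p : G.Walk u v} (hp : p.IsPath)
    (huv : u ≠ v) : (G.induce ({y | y ∈ p.support} \ {v})).Connected := by
  refine induce_connected_of_forall_walk ⟨p.start_mem_support, huv⟩ fun z ⟨hz, hzv⟩ =>
    ⟨p.takeUntil z hz, fun y hy => ⟨p.support_takeUntil_subset_support hz hy, ?_⟩⟩
  rintro rfl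
  exact Walk.endpoint_notMem_support_takeUntil hp hz (Ne.symm hzv) hy

lemma Walk.IsCycle.connected_induce_support_diff_start {c : G.Walk u u} (hc : c.IsCycle) :
    (G.induce ({y | y ∈ c.support} \ {u})).Connected := by
  cases c with
  | nil => exact absurd hc Walk.not_isCycle_nil
  | cons h p =>
    have hsupp : {y | y ∈ (Walk.cons h p).support} \ {u} = {y | y ∈ p.support} \ {u} := by
      ext y
      simp only [Walk.support_cons, List.mem_cons, Set.mem_sdiff, Set.mem_ofPred_eq,
        Set.mem_singleton_iff]
      tauto
    rw [hsupp]
    exact ((Walk.cons_isCycle_iff p h).1 hc).1.connected_induce_support_diff_end h.ne.symm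

lemma Walk.IsCycle.isBiconnected_support {c : G.Walk u u} (hc : c.IsCycle) :
    IsBiconnected G {y | y ∈ c.support} := by
  refine ⟨c.connected_induce_support, fun x hx => ?_⟩
  have hsupp : {y | y ∈ (c.rotate x hx).support} = {y | y ∈ c.support} :=
    Set.ext fun _ => c.mem_support_rotate_iff x hx
  rw [← hsupp]
  exact (hc.rotate hx).connected_induce_support_diff_start

end SimpleGraph

namespace IsBlockGraph

open SimpleGraph

variable {G : SimpleGraph V} {u v : V}

lemma isClique_of_isBiconnected_s11 [Finite V] (hG : IsBlockGraph G) {S : Set V}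
    (hS : IsBiconnected G S) : G.IsClique S := by
  obtain ⟨M, hSM, hM⟩ := Finite.exists_le_maximal (p := IsBiconnected G) hS
  exact (hG M hM.prop fun S' hMS' hS' => hMS'.antisymm (hM.le_of_ge hS' hMS')).subset hSM

lemma eq_of_length_eq_dist [Finite V] (hG : IsBlockGraph G) {p q : G.Walk u v}
    (hp : p.length = G.dist u v) (hq : q.length = G.dist u v) : p = q := by
  by_contra hpq
  obtain ⟨a, b, p', q', hp', hq', hc⟩ :=
    (p.isPath_of_length_eq_dist hp).exists_isCycle_of_ne (q.isPath_of_length_eq_dist hq) hpq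
  have hdist_le : G.dist a b ≤ 1 := by
    rcases eq_or_ne a b with rfl | hab
    · simp
    · have hb : b ∈ (p'.append q'.reverse).support :=
        (Walk.mem_support_append_iff _ _).2 (Or.inl p'.end_mem_support)
      exact (dist_eq_one_iff_adj.2 <|
        hG.isClique_of_isBiconnected_s11 hc.isBiconnected_support
          (Walk.start_mem_support _) hb hab).le
  have hlen := hc.three_le_length
  rw [Walk.length_append, Walk.length_reverse, length_eq_dist_of_subwalk hp hp',
    length_eq_dist_of_subwalk hq hq'] at hlen
  omega

end IsBlockGraph

/-- In a block graph, between every pair of distinct vertices there is a unique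
shortest path. -/
theorem stmt11 {V : Type u} [Fintype V] (G : SimpleGraph V)
    (hconn : G.Connected) (hbg : IsBlockGraph G) :
    ∀ u v : V, u ≠ v →
      ∃! p : G.Walk u v, p.IsPath ∧
        ∀ q : G.Walk u v, q.IsPath → p.length ≤ q.length := by
  intro u v _
  obtain ⟨p, hp, hp_dist⟩ := hconn.exists_path_of_dist u v
  refine ⟨p, ⟨hp, fun q _ => hp_dist ▸ SimpleGraph.dist_le q⟩, fun p' ⟨_, hp'_min⟩ => ?_⟩
  exact hbg.eq_of_length_eq_dist
    ((hp'_min p hp).trans hp_dist.le |>.antisymm (SimpleGraph.dist_le p')) hp_dist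
end

section
/- Let T be a tree of transitive tournaments with unique source carrying a recursive max-linear model with unit-Fréchet margins, and let v be a node with at least one parent, all parents of v lying in the tournament τ with node set V_τ. Then b_{vv} = 1 + ∑_{u ∈ pa(v)} ∑_{p ∈ π(u,v)} (-1)^{|p|} c_p, where the inner sum is over all directed paths p from u to v (necessarily inside τ), |p| is the number of edges of p, and c_p the product of edge weights of p. In particular, b_{vv} depends only on the edge weights within τ. -/
/-!
Every ancestor `i` of `v` enters the tournament of `v` through its *gateway* `g i`, the last
vertex before `v` on the critical shortest path from `i` to `v`. Since every cycle of a block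
graph spans a clique, every path from `i` to `v` passes through `g i`; hence for each parent `u`
of `v` reachable from `i`, either `g i = u` or the critical path from `i` to `u` ends with the edge
`g i → u`. Grouping the ancestors by gateway, the masses `T j = gatewayMass … j` of the parents
satisfy `b_vv = 1 - ∑_j c_jv T_j` and `T_u + ∑_{j → u} c_ju T_j = 1`, while splitting paths after
their first edge gives `S_u + ∑_{u → x} c_ux S_x = -c_uv` for the signed path sums `S_u`. The
two systems are transposes of each other, so `∑_u S_u = -∑_u c_uv T_u`.
-/

open scoped Classical

universe u

variable {V : Type u}

open Relation

section Paths

variable {E : V → V → Prop} {a b x : V} {l l₁ l₂ : List V}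

namespace IsDirSeq

theorem ne_nil (h : IsDirSeq E a b l) : l ≠ [] := by
  rintro rfl
  simp [IsDirSeq] at h

theorem isChain (h : IsDirSeq E a b l) : l.IsChain E := h.1

theorem head_mem (h : IsDirSeq E a b l) : a ∈ l := List.mem_of_mem_head? h.2.1

theorem getLast_mem (h : IsDirSeq E a b l) : b ∈ l := List.mem_of_mem_getLast? h.2.2

theorem exists_cons (h : IsDirSeq E a b l) : ∃ r, l = a :: r := by
  match l, h.2.1 with
  | y :: r, hy => exact ⟨r, by simpa using hy⟩

theorem pair (hab : E a b) : IsDirSeq E a b [a, b] := ⟨List.isChain_pair.mpr hab, rfl, rfl⟩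

theorem cons (hax : E a x) (h : IsDirSeq E x b l) : IsDirSeq E a b (a :: l) := by
  obtain ⟨hc, hh, hl⟩ := h
  cases l with
  | nil => simp at hh
  | cons y l =>
    obtain rfl : y = x := by simpa using hh
    exact ⟨List.isChain_cons_cons.mpr ⟨hax, hc⟩, rfl, by rwa [List.getLast?_cons_cons]⟩

theorem concat (h : IsDirSeq E a x l) (hxb : E x b) : IsDirSeq E a b (l ++ [b]) := by
  obtain ⟨hc, hh, hl⟩ := h
  refine ⟨List.isChain_append.mpr ⟨hc, List.isChain_singleton b, ?_⟩, ?_, List.getLast?_concat⟩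
  · simp_all
  · rwa [List.head?_append_of_ne_nil _ (by rintro rfl; simp at hh)]

theorem split_left (h : IsDirSeq E a b (l₁ ++ x :: l₂)) : IsDirSeq E a x (l₁ ++ [x]) := by
  obtain ⟨hc, hh, -⟩ := h
  refine ⟨hc.infix ⟨[], l₂, by simp⟩, ?_, List.getLast?_concat⟩
  simpa [List.head?_append] using hh

theorem split_right (h : IsDirSeq E a b (l₁ ++ x :: l₂)) : IsDirSeq E x b (x :: l₂) := by
  obtain ⟨hc, -, hl⟩ := h
  refine ⟨hc.infix ⟨l₁, [], by simp⟩, rfl, ?_⟩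
  simpa [List.getLast?_append] using hl

theorem append (h₁ : IsDirSeq E a x (l₁ ++ [x])) (h₂ : IsDirSeq E x b (x :: l₂)) :
    IsDirSeq E a b (l₁ ++ x :: l₂) := by
  refine ⟨?_, ?_, ?_⟩
  · show (l₁ ++ x :: l₂).IsChain E
    simpa using h₁.isChain.append_overlap (l₃ := l₂) (by simpa using h₂.isChain) (by simp)
  · simpa [List.head?_append] using h₁.2.1
  · simpa [List.getLast?_append] using h₂.2.2

theorem exists_eq_cons (h : IsDirSeq E a b l) (hab : a ≠ b) :
    ∃ x r, l = a :: r ∧ E a x ∧ IsDirSeq E x b r := by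
  have hc := h.isChain
  obtain ⟨-, hh, hl⟩ := h
  match l, hc, hh, hl with
  | [y], _, hh, hl => simp_all
  | y :: z :: t, hc, hh, hl =>
    obtain rfl : y = a := by simpa using hh
    rw [List.isChain_cons_cons] at hc
    exact ⟨z, z :: t, rfl, hc.1, hc.2, rfl, by rwa [List.getLast?_cons_cons] at hl⟩

theorem exists_eq_concat (h : IsDirSeq E a b l) (hab : a ≠ b) :
    ∃ x p, l = p ++ [b] ∧ IsDirSeq E a x p ∧ E x b := by
  obtain ⟨p, y, rfl⟩ := (List.eq_nil_or_concat' l).resolve_left h.ne_nil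
  obtain rfl : y = b := by simpa using h.2.2
  have hp : p ≠ [] := by
    rintro rfl
    have := h.2.1
    simp_all
  obtain ⟨q, x, rfl⟩ := (List.eq_nil_or_concat' p).resolve_left hp
  rw [List.append_assoc, List.singleton_append] at h
  exact ⟨x, q ++ [x], by simp, h.split_left, List.isChain_pair.mp h.split_right.isChain⟩

theorem two_le_length (h : IsDirSeq E a b l) (hab : a ≠ b) : 2 ≤ l.length := by
  obtain ⟨x, r, rfl, -, hr⟩ := h.exists_eq_cons hab
  have := List.length_pos_iff.mpr hr.ne_nil
  simp only [List.length_cons]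
  omega

theorem eq_pair (h : IsDirSeq E a b l) (hab : a ≠ b) (hl : l.length ≤ 2) : l = [a, b] := by
  obtain ⟨x, r, rfl, -, hr⟩ := h.exists_eq_cons hab
  match r, hr, hl with
  | [y], hr, _ => simpa using hr.2.2

theorem transGen (h : IsDirSeq E a b l) (hab : a ≠ b) : TransGen E a b := by
  induction l generalizing a with
  | nil => exact absurd rfl h.ne_nil
  | cons y r ih =>
    obtain ⟨x, r', hr, hax, hx⟩ := h.exists_eq_cons hab
    obtain rfl : r = r' := (List.cons.inj hr).2
    by_cases hxb : x = b
    · subst hxb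
      exact .single hax
    · exact .head hax (ih hx hxb)

theorem reflTransGen (h : IsDirSeq E a b l) : ReflTransGen E a b := by
  by_cases hab : a = b
  · subst hab
    exact .refl
  · exact (h.transGen hab).to_reflTransGen

theorem eq_singleton (hdag : ∀ x, ¬ TransGen E x x) (h : IsDirSeq E a a l) : l = [a] := by
  match l, h.isChain, h.2.1, h with
  | [y], _, hh, _ => simpa using hh
  | y :: z :: t, hc, hh, h =>
    obtain rfl : y = a := by simpa using hh
    have hza : ReflTransGen E z y :=
      (show IsDirSeq E y y ([y] ++ z :: t) from h).split_right.reflTransGen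
    exact absurd (TransGen.head' (List.isChain_cons_cons.mp hc).1 hza) (hdag y)

end IsDirSeq

end Paths

section ShortestCritical

variable {E : V → V → Prop} {c : V → V → ℝ} {a b x : V} {l l' l₁ l₂ p : List V}

def IsShortestPath (E : V → V → Prop) (a b : V) (l : List V) : Prop :=
  IsDirSeq E a b l ∧ ∀ l', IsDirSeq E a b l' → l.length ≤ l'.length

def IsCriticalPath (E : V → V → Prop) (c : V → V → ℝ) (a b : V) (l : List V) : Prop :=
  IsDirSeq E a b l ∧ ∀ l', IsDirSeq E a b l' → l' ≠ l → prodAlong c l' < prodAlong c l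

theorem IsShortestPath.eq_pair (hdag : ∀ x, ¬ TransGen E x x) (h : IsShortestPath E a b l)
    (hab : E a b) : l = [a, b] :=
  h.1.eq_pair (by rintro rfl; exact hdag a (.single hab)) (h.2 _ (.pair hab))

theorem IsShortestPath.split_right (h : IsShortestPath E a b (l₁ ++ x :: l₂)) :
    IsShortestPath E x b (x :: l₂) := by
  refine ⟨h.1.split_right, fun r hr => ?_⟩
  obtain ⟨r, rfl⟩ := hr.exists_cons
  have := h.2 _ (h.1.split_left.append hr)
  simp only [List.length_append, List.length_cons] at this ⊢
  omega

theorem prodAlong_concat (c : V → V → ℝ) (hp : p.getLast? = some x) (b : V) :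
    prodAlong c (p ++ [b]) = prodAlong c p * c x b := by
  induction p with
  | nil => simp at hp
  | cons y r ih =>
    match r, hp, ih with
    | [], hp, _ =>
      obtain rfl : y = x := by simpa using hp
      simp [prodAlong]
    | z :: t, hp, ih =>
      rw [List.getLast?_cons_cons] at hp
      simp only [List.cons_append, prodAlong] at ih ⊢
      rw [ih hp, mul_assoc]

theorem IsCriticalPath.split_concat (h : IsCriticalPath E c a b (p ++ [b]))
    (hp : IsDirSeq E a x p) (hxb : E x b) (hc : 0 < c x b) : IsCriticalPath E c a x p := by
  refine ⟨hp, fun p' hp' hne => ?_⟩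
  have := h.2 _ (hp'.concat hxb) (by simpa using hne)
  rw [prodAlong_concat c hp'.2.2, prodAlong_concat c hp.2.2] at this
  exact lt_of_mul_lt_mul_right this hc.le

theorem IsCriticalPath.eq (h : IsCriticalPath E c a b l) (h' : IsCriticalPath E c a b l') :
    l = l' := by
  by_contra hne
  exact lt_asymm (h.2 l' h'.1 (Ne.symm hne)) (h'.2 l h.1 hne)

end ShortestCritical

section BlockGraph

variable {G : SimpleGraph V} {a : V} {l : List V}

theorem SimpleGraph.induce_connected_of_isChain (hl : l.IsChain G.Adj) (hne : l ≠ []) :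
    (G.induce {x | x ∈ l}).Connected := by
  induction l with
  | nil => exact absurd rfl hne
  | cons a r ih =>
    match r, hl, ih with
    | [], _, _ => exact (Walk.nil : G.Walk a a).connected_induce_support
    | b :: t, hl, ih =>
      rw [List.isChain_cons_cons] at hl
      have hset : {x | x ∈ a :: b :: t} = {a, b} ∪ {x | x ∈ b :: t} := by
        ext
        simp only [Set.mem_ofPred_eq, List.mem_cons, Set.mem_union, Set.mem_insert_iff,
          Set.mem_singleton_iff]
        tauto
      rw [hset]
      exact induce_union_connected (induce_pair_connected_of_adj hl.1).preconnected
        (ih hl.2 (List.cons_ne_nil _ _)).preconnected ⟨b, by simp⟩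

theorem isBiconnected_of_isChain_cycle (hc : (a :: l ++ [a]).IsChain G.Adj)
    (hnd : (a :: l).Nodup) (hne : l ≠ []) : IsBiconnected G {x | x ∈ a :: l} := by
  have hpath : (a :: l).IsChain G.Adj := hc.infix ⟨[], [a], by simp⟩
  refine ⟨G.induce_connected_of_isChain hpath (List.cons_ne_nil _ _), fun y hy => ?_⟩
  obtain ⟨c₁, c₂, hsplit⟩ := List.append_of_mem (show y ∈ a :: l from hy)
  have hy₁₂ : y ∉ c₁ ++ c₂ := (List.nodup_cons.mp (List.nodup_middle.mp (hsplit ▸ hnd))).1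
  have hset : {x | x ∈ a :: l} \ {y} = {x | x ∈ c₂ ++ c₁} := by
    ext x
    simp only [hsplit, Set.mem_sdiff, Set.mem_ofPred_eq, Set.mem_singleton_iff, List.mem_append,
      List.mem_cons]
    constructor
    · rintro ⟨hx₁ | rfl | hx₂, hxy⟩ <;> tauto
    · rintro (hx | hx) <;> refine ⟨by tauto, ?_⟩ <;> rintro rfl <;> simp_all
  rw [hset]
  -- removing `y` from the cycle leaves the path that runs around the other way
  rcases c₁ with _ | ⟨z, c₁⟩
  · obtain ⟨hy, rfl⟩ : a = y ∧ l = c₂ := by simpa using hsplit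
    subst y
    rw [List.append_nil]
    exact G.induce_connected_of_isChain (hc.infix ⟨[a], [a], by simp⟩) hne
  · obtain ⟨hz, rfl⟩ : a = z ∧ l = c₁ ++ y :: c₂ := by simpa using hsplit
    subst z
    have h₂ : (c₂ ++ [a]).IsChain G.Adj := hc.infix ⟨a :: c₁ ++ [y], [], by simp⟩
    have h₁ : ([a] ++ c₁).IsChain G.Adj := hpath.infix ⟨[], y :: c₂, by simp⟩
    rw [show c₂ ++ a :: c₁ = c₂ ++ [a] ++ c₁ by simp]
    exact G.induce_connected_of_isChain (h₂.append_overlap h₁ (by simp)) (by simp)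

theorem IsBlockGraph.isClique_of_isChain_cycle [Finite V] (hG : IsBlockGraph G)
    (hc : (a :: l ++ [a]).IsChain G.Adj) (hnd : (a :: l).Nodup) (hne : l ≠ []) :
    G.IsClique {x | x ∈ a :: l} := by
  obtain ⟨T, hST, hT⟩ := Finite.exists_le_maximal (isBiconnected_of_isChain_cycle hc hnd hne)
  exact (hG T hT.1 fun S hTS hS => hTS.antisymm (hT.2 hS hTS)).subset hST

end BlockGraph

section TreeOfTournaments

variable {E : V → V → Prop} {a b x y : V} {l m p : List V}

theorem skeleton_adj_of_edge (hdag : ∀ x, ¬ TransGen E x x) (h : E a b) :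
    (skeleton E).Adj a b :=
  ⟨by rintro rfl; exact hdag a (.single h), Or.inl h⟩

theorem edge_of_skeleton_adj (hdag : ∀ x, ¬ TransGen E x x) (hadj : (skeleton E).Adj a b)
    (h : TransGen E a b) : E a b :=
  hadj.2.resolve_right fun hba => hdag a (h.tail hba)

theorem IsDirSeq.nodup (hdag : ∀ x, ¬ TransGen E x x) (h : IsDirSeq E a b l) : l.Nodup := by
  induction l generalizing a with
  | nil => simp
  | cons y r ih =>
    obtain rfl : y = a := by simpa using h.2.1
    rcases r with _ | ⟨z, t⟩
    · simp
    have hr : IsDirSeq E z b (z :: t) := (show IsDirSeq E y b ([y] ++ z :: t) from h).split_right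
    refine List.nodup_cons.mpr ⟨fun hy => ?_, ih hr⟩
    obtain ⟨s₁, s₂, hs⟩ := List.append_of_mem hy
    exact hdag y (.head' (List.isChain_cons_cons.mp h.isChain).1 (hs ▸ hr).split_left.reflTransGen)

variable [Finite V]

theorem IsDirSeq.isClique (hdag : ∀ x, ¬ TransGen E x x) (hbg : IsBlockGraph (skeleton E))
    (h : IsDirSeq E a b l) (hab : E a b) : (skeleton E).IsClique {x | x ∈ l} := by
  obtain ⟨_, r, rfl, -, hr⟩ := h.exists_eq_cons (skeleton_adj_of_edge hdag hab).ne
  refine hbg.isClique_of_isChain_cycle (List.isChain_append.mpr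
    ⟨h.isChain.imp fun _ _ => skeleton_adj_of_edge hdag, List.isChain_singleton a, ?_⟩)
    (h.nodup hdag) hr.ne_nil
  simp only [h.2.2, Option.mem_def, Option.some.injEq, List.head?_cons]
  rintro _ rfl _ rfl
  exact (skeleton_adj_of_edge hdag hab).symm

theorem IsDirSeq.edge_of_transGen (hdag : ∀ x, ¬ TransGen E x x)
    (hbg : IsBlockGraph (skeleton E)) (h : IsDirSeq E a b l) (hab : E a b) (hx : x ∈ l)
    (hy : y ∈ l) (hxy : TransGen E x y) : E x y :=
  edge_of_skeleton_adj hdag (h.isClique hdag hbg hab hx hy (by rintro rfl; exact hdag x hxy)) hxy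

theorem edge_of_isDirSeq_of_disjoint (hdag : ∀ x, ¬ TransGen E x x)
    (hbg : IsBlockGraph (skeleton E)) (hl : IsDirSeq E a b l) (hm : IsDirSeq E a b m)
    (hl3 : 3 ≤ l.length) (hdisj : ∀ x ∈ l, x ∈ m → x = a ∨ x = b) : E a b := by
  have hab : a ≠ b := by
    rintro rfl
    simp [hl.eq_singleton hdag] at hl3
  obtain ⟨y, r, rfl, hay, hr⟩ := hm.exists_eq_cons hab
  by_cases hyb : y = b
  · exact hyb ▸ hay
  obtain ⟨-, s, rfl, -, -⟩ := hr.exists_eq_concat hyb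
  obtain ⟨_, t, rfl, -, ht⟩ := hl.exists_eq_cons hab
  obtain ⟨t, rfl⟩ : ∃ t', t = t' ++ [b] := by
    obtain ⟨t', z, rfl⟩ := (List.eq_nil_or_concat' t).resolve_left ht.ne_nil
    obtain rfl : z = b := by simpa using ht.2.2
    exact ⟨t', rfl⟩
  have hndl := hl.nodup hdag
  have hndm := hm.nodup hdag
  simp only [List.nodup_cons, List.nodup_append, List.mem_append, List.mem_singleton] at hndl hndm
  -- the cycle runs forward along `l` and back along `m`
  have hcyc : (a :: (t ++ [b] ++ s.reverse) ++ [a]).IsChain (skeleton E).Adj := by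
    have hl' := hl.isChain.imp fun _ _ => skeleton_adj_of_edge hdag
    have hm' : ([b] ++ (s.reverse ++ [a])).IsChain (skeleton E).Adj := by
      simpa using List.isChain_reverse.mpr
        (hm.isChain.imp fun _ _ h => (skeleton_adj_of_edge hdag h).symm)
    simpa using hl'.append_overlap (l₁ := a :: t) (l₂ := [b]) hm' (by simp)
  have hnd : (a :: (t ++ [b] ++ s.reverse)).Nodup := by
    simp only [List.nodup_cons, List.nodup_append, List.mem_append, List.mem_reverse,
      List.nodup_reverse, List.mem_singleton]
    refine ⟨by tauto, ⟨hndl.2.1, by simp, hndl.2.2.2⟩, hndm.2.1, ?_⟩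
    rintro z (hz | rfl) w hw rfl
    · rcases hdisj z (by simp [hz]) (by simp [hw]) with rfl | rfl
      · exact hndl.1 (.inl hz)
      · exact hndl.2.2.2 _ hz _ rfl rfl
    · exact hndm.2.2.2 _ hw _ rfl rfl
  have hcl := hbg.isClique_of_isChain_cycle hcyc hnd (by simp)
  exact edge_of_skeleton_adj hdag (hcl (by simp) (by simp) hab) (hl.transGen hab)

theorem IsShortestPath.mem_of_isDirSeq (hdag : ∀ x, ¬ TransGen E x x)
    (hbg : IsBlockGraph (skeleton E)) (hL : IsShortestPath E a b (p ++ [b]))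
    (hp : IsDirSeq E a x p) (hm : IsDirSeq E a b m) : x ∈ m := by
  induction hn : m.length using Nat.strong_induction_on generalizing a p m with
  | _ n ih =>
  by_cases hxa : x = a
  · exact hxa ▸ hm.head_mem
  by_cases hcommon : ∃ y ∈ p, y ≠ a ∧ y ∈ m
  · obtain ⟨y, hyp, hya, hym⟩ := hcommon
    obtain ⟨p₁, p₂, rfl⟩ := List.append_of_mem hyp
    obtain ⟨m₁, m₂, rfl⟩ := List.append_of_mem hym
    have hm₁ : m₁ ≠ [] := by
      rintro rfl
      exact hya (by simpa using hm.2.1)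
    have hL' : IsShortestPath E y b (y :: p₂ ++ [b]) := by
      simpa using (show IsShortestPath E a b (p₁ ++ y :: (p₂ ++ [b])) by simpa using hL).split_right
    have hlt : (y :: m₂).length < n := by
      have := List.length_pos_iff.mpr hm₁
      simp only [← hn, List.length_append, List.length_cons]
      omega
    exact List.mem_append_right _ (ih _ hlt hL' hp.split_right hm.split_right rfl)
  · push Not at hcommon
    have hp2 := hp.two_le_length (Ne.symm hxa)
    have hab : E a b := edge_of_isDirSeq_of_disjoint hdag hbg hL.1 hm
      (by simp only [List.length_append, List.length_singleton]; omega)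
      (fun z hz hzm => by
        rcases List.mem_append.mp hz with hzp | hzb
        · exact .inl (by by_contra hza; exact hcommon z hzp hza hzm)
        · exact .inr (List.mem_singleton.mp hzb))
    have hpa : p = [a] := List.append_cancel_right (hL.eq_pair hdag hab)
    have hax : a = x := by simpa [hpa] using hp.2.2
    exact absurd hax.symm hxa

end TreeOfTournaments

section MaxLinear

variable {E : V → V → Prop} {cE : V → V → ℝ} {sp : V → V → ℝ} {i u v w x : V} {l p : List V}

def HasCriticalShortestPaths (E : V → V → Prop) (cE sp : V → V → ℝ) : Prop :=
  ∀ i w, TransGen E i w →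
    ∃ l, IsShortestPath E i w l ∧ IsCriticalPath E cE i w l ∧ sp i w = prodAlong cE l

noncomputable def reflWeight (sp : V → V → ℝ) (i j : V) : ℝ := if i = j then 1 else sp i j

theorem HasCriticalShortestPaths.reflWeight_eq (hdag : ∀ x, ¬ TransGen E x x)
    (hsp : HasCriticalShortestPaths E cE sp) (h : IsCriticalPath E cE i w l) :
    reflWeight sp i w = prodAlong cE l := by
  unfold reflWeight
  split_ifs with hiw
  · subst hiw
    simp [h.1.eq_singleton hdag, prodAlong]
  · obtain ⟨l₀, -, hl₀, hsp⟩ := hsp i w (h.1.transGen hiw)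
    rw [hsp, hl₀.eq h]

theorem HasCriticalShortestPaths.prodAlong_concat_eq (hdag : ∀ x, ¬ TransGen E x x)
    (hpos : ∀ i j, E i j → 0 < cE i j) (hsp : HasCriticalShortestPaths E cE sp)
    (h : IsCriticalPath E cE i w (p ++ [w])) (hp : IsDirSeq E i x p) (hxw : E x w) :
    prodAlong cE (p ++ [w]) = reflWeight sp i x * cE x w := by
  rw [prodAlong_concat cE hp.2.2, hsp.reflWeight_eq hdag (h.split_concat hp hxw (hpos x w hxw))]

theorem HasCriticalShortestPaths.edge_and_sp_eq_of_ne [Finite V] (hdag : ∀ x, ¬ TransGen E x x)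
    (hbg : IsBlockGraph (skeleton E)) (hpos : ∀ i j, E i j → 0 < cE i j)
    (hsp : HasCriticalShortestPaths E cE sp) (hL : IsShortestPath E i v (p ++ [v]))
    (hp : IsDirSeq E i x p) (hxv : E x v) (huv : E u v) (hiu : TransGen E i u) (hxu : x ≠ u) :
    E x u ∧ sp i u = reflWeight sp i x * cE x u := by
  obtain ⟨l, hls, hlc, hle⟩ := hsp i u hiu
  have hxl : x ∈ l := by
    simpa [(skeleton_adj_of_edge hdag hxv).ne] using
      hL.mem_of_isDirSeq hdag hbg hp (hls.1.concat huv)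
  obtain ⟨l₁, l₂, rfl⟩ := List.append_of_mem hxl
  have hxu_path : IsShortestPath E x u (x :: l₂) := hls.split_right
  have hxu' : E x u :=
    (hxu_path.1.concat huv).edge_of_transGen hdag hbg hxv (by simp)
      (List.mem_append_left _ hxu_path.1.getLast_mem) (hxu_path.1.transGen hxu)
  obtain rfl : l₂ = [u] := by simpa using hxu_path.eq_pair hdag hxu'
  refine ⟨hxu', ?_⟩
  rw [hle]
  simpa using hsp.prodAlong_concat_eq hdag hpos (p := l₁ ++ [x]) (by simpa using hlc)
    hls.1.split_left hxu'

/-- `g i` is the gateway through which the ancestor `i` reaches `v`: the last vertex before `v`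
on the critical shortest path from `i` to `v`. -/
structure IsGatewayMap (E : V → V → Prop) (cE sp : V → V → ℝ) (v : V) (g : V → V) : Prop where
  edge : ∀ i, TransGen E i v → E (g i) v
  reflTransGen : ∀ i, TransGen E i v → ReflTransGen E i (g i)
  eq_self : ∀ i, E i v → g i = i
  sp_eq : ∀ i, TransGen E i v → sp i v = reflWeight sp i (g i) * cE (g i) v
  edge_and_sp_eq_of_ne : ∀ i u, E u v → TransGen E i u → g i ≠ u →
    E (g i) u ∧ sp i u = reflWeight sp i (g i) * cE (g i) u

theorem exists_isGatewayMap [Finite V] (hdag : ∀ x, ¬ TransGen E x x)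
    (hbg : IsBlockGraph (skeleton E)) (hpos : ∀ i j, E i j → 0 < cE i j)
    (hsp : HasCriticalShortestPaths E cE sp) (v : V) : ∃ g, IsGatewayMap E cE sp v g := by
  have hsplit : ∀ i, TransGen E i v → ∃ x p, IsShortestPath E i v (p ++ [v]) ∧
      IsCriticalPath E cE i v (p ++ [v]) ∧ sp i v = prodAlong cE (p ++ [v]) ∧
      IsDirSeq E i x p ∧ E x v := by
    intro i hi
    obtain ⟨l, hs, hc, he⟩ := hsp i v hi
    obtain ⟨x, p, rfl, hp, hxv⟩ := hs.1.exists_eq_concat (by rintro rfl; exact hdag i hi)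
    exact ⟨x, p, hs, hc, he, hp, hxv⟩
  choose! g p hs hc he hp hgv using hsplit
  refine ⟨g, hgv, fun i hi => (hp i hi).reflTransGen, fun i hiv => ?_, fun i hi => ?_,
    fun i u huv hiu hne => ?_⟩
  · have hpi : p i = [i] := List.append_cancel_right ((hs i (.single hiv)).eq_pair hdag hiv)
    have := (hp i (.single hiv)).2.2
    rw [hpi] at this
    simpa using this.symm
  · rw [he i hi]
    exact hsp.prodAlong_concat_eq hdag hpos (hc i hi) (hp i hi) (hgv i hi)
  · exact hsp.edge_and_sp_eq_of_ne hdag hbg hpos (hs i (hiu.tail huv)) (hp i (hiu.tail huv))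
      (hgv i (hiu.tail huv)) huv hiu hne

variable {cD : V → ℝ} {g : V → V}

/-- An ancestor `i` of the parent `u` of `v` either has gateway `u`, or reaches `u` through
its gateway `g i`, which is then a parent of `u`. -/
theorem IsGatewayMap.ite_transGen_eq (hg : IsGatewayMap E cE sp v g)
    (hdag : ∀ x, ¬ TransGen E x x) (huv : E u v) (i : V) :
    (if TransGen E i u then cD i * sp i u else 0) =
      (if TransGen E i v ∧ g i = u then cD i * reflWeight sp i u else 0)
        - (if i = u then cD u else 0)
        + (if TransGen E i v then
            cD i * reflWeight sp i (g i) * (if E (g i) u then cE (g i) u else 0) else 0) := by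
  have hnE : ∀ x, ¬ E x x := fun x h => hdag x (.single h)
  by_cases hiu : i = u
  · subst hiu
    simp [hdag i, TransGen.single huv, hg.eq_self i huv, reflWeight, hnE]
  by_cases hiu' : TransGen E i u
  · have hiv : TransGen E i v := hiu'.tail huv
    by_cases hgu : g i = u
    · simp [hiu', hiv, hgu, hiu, reflWeight, hnE]
    · obtain ⟨hE, hspu⟩ := hg.edge_and_sp_eq_of_ne i u huv hiu' hgu
      simp [hiu', hiv, hgu, hiu, hE, hspu, mul_assoc]
  · have hgu : ∀ hiv : TransGen E i v, g i ≠ u ∧ ¬ E (g i) u := by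
      refine fun hiv => ⟨fun hgi => ?_, fun hE => hiu' (.tail' (hg.reflTransGen i hiv) hE)⟩
      rcases reflTransGen_iff_eq_or_transGen.mp (hgi ▸ hg.reflTransGen i hiv) with h | h
      exacts [hiu h.symm, hiu' h]
    by_cases hiv : TransGen E i v <;> simp [hiu', hiu, hiv, hgu]

variable [Fintype V]

noncomputable def gatewayMass (E : V → V → Prop) (cD : V → ℝ) (sp : V → V → ℝ) (v : V)
    (g : V → V) (j : V) : ℝ :=
  ∑ i, if TransGen E i v ∧ g i = j then cD i * reflWeight sp i j else 0

theorem IsGatewayMap.sum_mul_gatewayMass (hg : IsGatewayMap E cE sp v g) (c : V → ℝ) :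
    ∑ j ∈ {j | E j v}, c j * gatewayMass E cD sp v g j =
      ∑ i, if TransGen E i v then cD i * reflWeight sp i (g i) * c (g i) else 0 := by
  simp only [gatewayMass, Finset.mul_sum]
  rw [Finset.sum_comm]
  refine Finset.sum_congr rfl fun i _ => ?_
  split_ifs with hiv
  · rw [Finset.sum_eq_single_of_mem (g i) (by simpa using hg.edge i hiv)]
    · simp [hiv, mul_comm]
    · intro j _ hj
      simp [Ne.symm hj]
  · simp [hiv]

theorem IsGatewayMap.cD_eq (hg : IsGatewayMap E cE sp v g)
    (hcD : cD v = 1 - ∑ i, if TransGen E i v then cD i * sp i v else 0) :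
    cD v = 1 - ∑ j ∈ {j | E j v}, cE j v * gatewayMass E cD sp v g j := by
  rw [hg.sum_mul_gatewayMass, hcD]
  congr 1
  refine Finset.sum_congr rfl fun i _ => ?_
  split_ifs with hiv
  · rw [hg.sp_eq i hiv, mul_assoc]
  · rfl

theorem IsGatewayMap.gatewayMass_add_sum (hg : IsGatewayMap E cE sp v g)
    (hdag : ∀ x, ¬ TransGen E x x)
    (hcD : cD u = 1 - ∑ i, if TransGen E i u then cD i * sp i u else 0) (huv : E u v) :
    gatewayMass E cD sp v g u +
      ∑ j ∈ {j | E j v}, (if E j u then cE j u else 0) * gatewayMass E cD sp v g j = 1 := by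
  have hsum := Finset.sum_congr rfl fun i (_ : i ∈ Finset.univ) =>
    hg.ite_transGen_eq (cD := cD) hdag huv i
  rw [Finset.sum_add_distrib, Finset.sum_sub_distrib, Finset.sum_ite_eq'] at hsum
  rw [hg.sum_mul_gatewayMass, gatewayMass]
  simp only [Finset.mem_univ, if_true] at hsum
  linarith

end MaxLinear

theorem Finset.sum_eq_sum_mul_of_dual {ι R : Type*} [CommRing R] (s : Finset ι)
    (C : ι → ι → R) {T F c : ι → R} (hT : ∀ u ∈ s, T u + ∑ j ∈ s, C j u * T j = 1)
    (hF : ∀ u ∈ s, F u + ∑ x ∈ s, C u x * F x = c u) :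
    ∑ u ∈ s, F u = ∑ u ∈ s, c u * T u := by
  calc ∑ u ∈ s, F u = ∑ u ∈ s, F u * (T u + ∑ j ∈ s, C j u * T j) :=
        Finset.sum_congr rfl fun u hu => by rw [hT u hu, mul_one]
    _ = ∑ u ∈ s, (F u + ∑ x ∈ s, C u x * F x) * T u := by
        simp only [mul_add, add_mul, Finset.sum_add_distrib, Finset.mul_sum, Finset.sum_mul]
        congr 1
        rw [Finset.sum_comm]
        exact Finset.sum_congr rfl fun _ _ => Finset.sum_congr rfl fun _ _ => by ring
    _ = ∑ u ∈ s, c u * T u := Finset.sum_congr rfl fun u hu => by rw [hF u hu]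

section SignedPathSums

def signedWeight (c : V → V → ℝ) (l : List V) : ℝ := (-1) ^ (l.length - 1) * prodAlong c l

theorem signedWeight_cons_cons (c : V → V → ℝ) (a b : V) (l : List V) :
    signedWeight c (a :: b :: l) = -(c a b * signedWeight c (b :: l)) := by
  simp only [signedWeight, prodAlong, List.length_cons, Nat.add_sub_cancel, pow_succ]
  ring

variable [Fintype V] {E : V → V → Prop} {u v : V} {P : V → Finset (List V)}

theorem sum_erase_pair_eq_sum_sum {M : Type*} [AddCommMonoid M] (hdag : ∀ x, ¬ TransGen E x x)
    (hbg : IsBlockGraph (skeleton E)) (hP : ∀ u l, l ∈ P u ↔ IsDirSeq E u v l) (huv : E u v)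
    (f : List V → M) :
    ∑ l ∈ (P u).erase [u, v], f l = ∑ x ∈ {x | E x v ∧ E u x}, ∑ r ∈ P x, f (u :: r) := by
  rw [Finset.sum_sigma']
  symm
  refine Finset.sum_bij (fun xr _ => u :: xr.2) ?_ ?_ ?_ fun _ _ => rfl
  · rintro ⟨x, r⟩ hxr
    simp only [Finset.mem_sigma, Finset.mem_filter, Finset.mem_univ, true_and, hP] at hxr
    refine Finset.mem_erase.mpr ⟨fun h => ?_, (hP u _).mpr (hxr.2.cons hxr.1.2)⟩
    obtain rfl : r = [v] := List.cons.inj h |>.2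
    obtain rfl : v = x := by simpa using hxr.2.2.1
    exact hdag v (.single hxr.1.1)
  · rintro ⟨x, r⟩ hxr ⟨x', r'⟩ hxr' h
    simp only [Finset.mem_sigma, hP] at hxr hxr'
    obtain rfl : r = r' := (List.cons.inj h).2
    obtain rfl : x = x' := Option.some.inj (hxr.2.2.1.symm.trans hxr'.2.2.1)
    rfl
  · intro l hl
    obtain ⟨hne, hl⟩ := Finset.mem_erase.mp hl
    have hl := (hP u l).mp hl
    obtain ⟨x, r, rfl, hux, hr⟩ := hl.exists_eq_cons (skeleton_adj_of_edge hdag huv).ne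
    have hxv : x ≠ v := by
      rintro rfl
      exact hne (by rw [hr.eq_singleton hdag])
    have hExv : E x v := hl.edge_of_transGen hdag hbg huv (List.mem_cons_of_mem _ hr.head_mem)
      hl.getLast_mem (hr.transGen hxv)
    exact ⟨⟨x, r⟩, by simpa [hP] using ⟨⟨hExv, hux⟩, hr⟩, rfl⟩

theorem sum_signedWeight_add_sum (c : V → V → ℝ) (hdag : ∀ x, ¬ TransGen E x x)
    (hbg : IsBlockGraph (skeleton E)) (hP : ∀ u l, l ∈ P u ↔ IsDirSeq E u v l) (huv : E u v) :
    ∑ l ∈ P u, signedWeight c l +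
      ∑ x ∈ {x | E x v}, (if E u x then c u x else 0) * ∑ l ∈ P x, signedWeight c l = -c u v := by
  rw [← Finset.add_sum_erase _ _ ((hP u _).mpr (.pair huv)),
    sum_erase_pair_eq_sum_sum hdag hbg hP huv, ← Finset.filter_filter, Finset.sum_filter,
    add_assoc, ← Finset.sum_add_distrib]
  have hcons : ∀ x,
      ∑ r ∈ P x, signedWeight c (u :: r) = -(c u x * ∑ r ∈ P x, signedWeight c r) := by
    intro x
    rw [Finset.mul_sum, ← Finset.sum_neg_distrib]
    refine Finset.sum_congr rfl fun r hr => ?_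
    obtain ⟨r, rfl⟩ := ((hP x r).mp hr).exists_cons
    exact signedWeight_cons_cons c u x r
  have hpair : signedWeight c [u, v] = -c u v := by simp [signedWeight, prodAlong]
  rw [hpair, Finset.sum_eq_zero fun x _ => by rw [hcons]; split_ifs <;> ring, add_zero]

end SignedPathSums

theorem stmt14_general {V : Type u} [Fintype V] (E : V → V → Prop)
    (httt : IsTTT E)
    (cE : V → V → ℝ) (cD : V → ℝ) (sp : V → V → ℝ)
    (hce : ∀ i j, E i j → 0 < cE i j ∧ cE i j < 1)
    -- `sp i v` is the weight product of the unique shortest directed path from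
    -- `i` to `v`, which is moreover the unique critical path:
    (hsp : ∀ i w, Relation.TransGen E i w → ∃ l : List V, IsDirSeq E i w l ∧
      (∀ l', IsDirSeq E i w l' → l.length ≤ l'.length) ∧
      sp i w = prodAlong cE l ∧
      (∀ l', IsDirSeq E i w l' → l' ≠ l → prodAlong cE l' < prodAlong cE l))
    (hcD : ∀ w, cD w =
      1 - ∑ i : V, if Relation.TransGen E i w then cD i * sp i w else 0)
    (v : V)
    -- `P u` enumerates all directed paths (vertex sequences) from `u` to `v`:
    (P : V → Finset (List V)) (hP : ∀ u (l : List V), l ∈ P u ↔ IsDirSeq E u v l) :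
    cD v = 1 + ∑ u : V, if E u v then
      ∑ l ∈ P u, (-1 : ℝ) ^ (l.length - 1) * prodAlong cE l else 0 := by
  obtain ⟨hdag, -, hbg⟩ := httt
  have hpos : ∀ i j, E i j → 0 < cE i j := fun i j h => (hce i j h).1
  have hsp' : HasCriticalShortestPaths E cE sp := fun i w hiw =>
    let ⟨l, hl, hshort, hspl, hcrit⟩ := hsp i w hiw
    ⟨l, ⟨hl, hshort⟩, ⟨hl, hcrit⟩, hspl⟩
  obtain ⟨g, hg⟩ := exists_isGatewayMap hdag hbg hpos hsp' v
  have hdual := Finset.sum_eq_sum_mul_of_dual {u | E u v} (fun j u => if E j u then cE j u else 0)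
    (fun u hu => hg.gatewayMass_add_sum hdag (hcD u) (by simpa using hu))
    (fun u hu => sum_signedWeight_add_sum cE hdag hbg hP (by simpa using hu))
  rw [hg.cD_eq (hcD v), ← Finset.sum_filter]
  simp only [signedWeight, neg_mul, Finset.sum_neg_distrib] at hdual
  rw [hdual]
  ring

/-- In the max-linear model on a ttt with unique source and critical unique
shortest paths, for a node `v` with at least one parent,
`b_vv = 1 + ∑_{u ∈ pa(v)} ∑_{p ∈ π(u,v)} (-1)^{|p|} c_p`. -/
theorem stmt14 {V : Type u} [Fintype V] (E : V → V → Prop)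
    (httt : IsTTT E) (hsrc : ∃! u : V, ∀ w, ¬ E w u)
    (cE : V → V → ℝ) (cD : V → ℝ) (sp : V → V → ℝ)
    (hce : ∀ i j, E i j → 0 < cE i j ∧ cE i j < 1)
    (hcDpos : ∀ w, 0 < cD w)
    -- `sp i v` is the weight product of the unique shortest directed path from
    -- `i` to `v`, which is moreover the unique critical path:
    (hsp : ∀ i w, Relation.TransGen E i w → ∃ l : List V, IsDirSeq E i w l ∧
      (∀ l', IsDirSeq E i w l' → l.length ≤ l'.length) ∧
      sp i w = prodAlong cE l ∧
      (∀ l', IsDirSeq E i w l' → l' ≠ l → prodAlong cE l' < prodAlong cE l))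
    (hcD : ∀ w, cD w =
      1 - ∑ i : V, if Relation.TransGen E i w then cD i * sp i w else 0)
    (v : V) (hv : ∃ u, E u v)
    -- `P u` enumerates all directed paths (vertex sequences) from `u` to `v`:
    (P : V → Finset (List V)) (hP : ∀ u (l : List V), l ∈ P u ↔ IsDirSeq E u v l) :
    cD v = 1 + ∑ u : V, if E u v then
      ∑ l ∈ P u, (-1 : ℝ) ^ (l.length - 1) * prodAlong cE l else 0 :=
  stmt14_general E httt cE cD sp hce hsp hcD v P hP
end

section
/- Let θ ∈ (0,1)^E be a critical edge-weight vector on a ttt (every unique shortest directed path strictly maximizes the path-weight product) with all c_{vv} = 1 - ∑_{i ∈ an(v)} c_{ii} c_{p(i,v)} > 0. Then for the max-linear coefficients b_{vi}: b_{vi} > 0 if and only if v ∈ Desc(i). Consequently the |V| coefficient vectors (b_{vi})_{v∈V}, i ∈ V, are pairwise distinct, and for each edge (i,v) ∈ E one has c_{iv} = b_{vi}/b_{ii}; hence θ is uniquely determined by the matrix (b_{vi}). -/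
open scoped Classical

universe u

variable {V : Type u}

/-!
All weights are positive, so `b v i` is positive exactly on the descendants of `i`. Two
distinct columns `i ≠ j` cannot agree: each would lie in the other's descendant set, which
acyclicity forbids. For an edge `(i, v)` the shortest path from `i` to `v` is the edge itself,
so `b v i / b i i = c_ii c_iv / c_ii = c_iv`.
-/

section Paths

variable {E : V → V → Prop}

theorem prodAlong_pos {c : V → V → ℝ} (hc : ∀ a b, E a b → 0 < c a b) :
    ∀ {l : List V}, l.IsChain E → 0 < prodAlong c l
  | [], _ => one_pos
  | [_], _ => one_pos
  | a :: b :: rest, h => by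
    obtain ⟨hab, hrest⟩ := List.isChain_cons_cons.mp h
    exact mul_pos (hc a b hab) (prodAlong_pos hc hrest)

theorem isDirSeq_pair {a b : V} (h : E a b) : IsDirSeq E a b [a, b] :=
  ⟨List.isChain_cons_cons.mpr ⟨h, List.isChain_singleton b⟩, rfl, rfl⟩

theorem IsDirSeq.eq_pair_of_length_le_two {a b : V} {l : List V} (hl : IsDirSeq E a b l)
    (hab : a ≠ b) (hlen : l.length ≤ 2) : l = [a, b] := by
  obtain ⟨_, hhead, hlast⟩ := hl
  match l, hlen with
  | [], _ => simp at hhead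
  | [x], _ => simp_all
  | [x, y], _ => simp_all

end Paths

/-- The max-linear coefficient `b_vi`, with `d i = c_ii` and `s i v = c_{p(i,v)}`. -/
noncomputable def maxLinCoeff (E : V → V → Prop) (d : V → ℝ) (s : V → V → ℝ) (v i : V) : ℝ :=
  if v = i then d v else if Relation.TransGen E i v then d i * s i v else 0

section MaxLinCoeff

variable {E : V → V → Prop} {d : V → ℝ} {s : V → V → ℝ}

theorem maxLinCoeff_self (v : V) : maxLinCoeff E d s v v = d v := if_pos rfl

theorem maxLinCoeff_pos_iff (hd : ∀ w, 0 < d w)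
    (hs : ∀ i w, Relation.TransGen E i w → 0 < s i w) (v i : V) :
    0 < maxLinCoeff E d s v i ↔ Relation.ReflTransGen E i v := by
  rw [Relation.reflTransGen_iff_eq_or_transGen, maxLinCoeff]
  by_cases hvi : v = i
  · simp [hvi, hd]
  · by_cases ht : Relation.TransGen E i v
    · simp [hvi, ht, mul_pos (hd i) (hs i v ht)]
    · simp [hvi, ht]

theorem maxLinCoeff_column_ne (hacyc : ∀ v, ¬ Relation.TransGen E v v) (hd : ∀ w, 0 < d w)
    (hs : ∀ i w, Relation.TransGen E i w → 0 < s i w) {i j : V} (hij : i ≠ j) :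
    (fun v => maxLinCoeff E d s v i) ≠ (fun v => maxLinCoeff E d s v j) := by
  intro hcol
  have hji : Relation.ReflTransGen E j i := by
    rw [← maxLinCoeff_pos_iff hd hs, ← congrFun hcol i, maxLinCoeff_self]
    exact hd i
  have hij' : Relation.ReflTransGen E i j := by
    rw [← maxLinCoeff_pos_iff hd hs, congrFun hcol j, maxLinCoeff_self]
    exact hd j
  rcases Relation.reflTransGen_iff_eq_or_transGen.mp hij' with h | h
  · exact hij h.symm
  · exact hacyc j (Relation.TransGen.trans_right hji h)

theorem maxLinCoeff_div_self {i v : V} (hvi : v ≠ i) (hiv : Relation.TransGen E i v)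
    (hd : d i ≠ 0) : maxLinCoeff E d s v i / maxLinCoeff E d s i i = s i v := by
  rw [maxLinCoeff, if_neg hvi, if_pos hiv, maxLinCoeff_self]
  field_simp

end MaxLinCoeff

theorem stmt16_general {V : Type u} (E : V → V → Prop)
    (httt : IsTTT E)
    (cE : V → V → ℝ) (cD : V → ℝ) (sp : V → V → ℝ)
    (hce : ∀ i j, E i j → 0 < cE i j ∧ cE i j < 1)
    (hcDpos : ∀ w, 0 < cD w)
    -- `sp i w` is the weight product of the unique shortest directed path from
    -- `i` to `w`, which strictly maximizes the path-weight product: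
    (hsp : ∀ i w, Relation.TransGen E i w → ∃ l : List V, IsDirSeq E i w l ∧
      (∀ l', IsDirSeq E i w l' → l.length ≤ l'.length) ∧
      sp i w = prodAlong cE l ∧
      (∀ l', IsDirSeq E i w l' → l' ≠ l → prodAlong cE l' < prodAlong cE l))
    (b : V → V → ℝ)
    (hb : ∀ v i, b v i = if v = i then cD v
      else if Relation.TransGen E i v then cD i * sp i v else 0) :
    (∀ v i : V, 0 < b v i ↔ Relation.ReflTransGen E i v) ∧
    (∀ i j : V, i ≠ j → (fun v => b v i) ≠ (fun v => b v j)) ∧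
    (∀ i v : V, E i v → cE i v = b v i / b i i) := by
  obtain rfl : b = fun v i => maxLinCoeff E cD sp v i := funext₂ hb
  have hsp_pos : ∀ i w, Relation.TransGen E i w → 0 < sp i w := by
    intro i w h
    obtain ⟨l, hl, -, hspl, -⟩ := hsp i w h
    exact hspl ▸ prodAlong_pos (fun a b h => (hce a b h).1) hl.1
  refine ⟨maxLinCoeff_pos_iff hcDpos hsp_pos,
    fun i j => maxLinCoeff_column_ne httt.1 hcDpos hsp_pos, fun i v hiv => ?_⟩
  have hvi : v ≠ i := by
    rintro rfl
    exact httt.1 v (.single hiv)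
  obtain ⟨l, hl, hmin, hspl, -⟩ := hsp i v (.single hiv)
  have hl_pair : l = [i, v] :=
    hl.eq_pair_of_length_le_two hvi.symm (hmin _ (isDirSeq_pair hiv))
  rw [maxLinCoeff_div_self hvi (.single hiv) (hcDpos i).ne', hspl, hl_pair]
  simp [prodAlong]

/-- For a critical edge-weight vector on a ttt: `b_vi > 0` iff `v ∈ Desc(i)`;
the coefficient vectors `(b_vi)_v` are pairwise distinct; and for each edge
`(i,v)` one has `c_iv = b_vi / b_ii`, so `θ` is determined by the matrix `b`. -/
theorem stmt16 {V : Type u} [Fintype V] (E : V → V → Prop)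
    (httt : IsTTT E)
    (cE : V → V → ℝ) (cD : V → ℝ) (sp : V → V → ℝ)
    (hce : ∀ i j, E i j → 0 < cE i j ∧ cE i j < 1)
    (hcDpos : ∀ w, 0 < cD w)
    -- `sp i w` is the weight product of the unique shortest directed path from
    -- `i` to `w`, which strictly maximizes the path-weight product:
    (hsp : ∀ i w, Relation.TransGen E i w → ∃ l : List V, IsDirSeq E i w l ∧
      (∀ l', IsDirSeq E i w l' → l.length ≤ l'.length) ∧
      sp i w = prodAlong cE l ∧
      (∀ l', IsDirSeq E i w l' → l' ≠ l → prodAlong cE l' < prodAlong cE l))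
    (hcD : ∀ w, cD w =
      1 - ∑ i : V, if Relation.TransGen E i w then cD i * sp i w else 0)
    (b : V → V → ℝ)
    (hb : ∀ v i, b v i = if v = i then cD v
      else if Relation.TransGen E i v then cD i * sp i v else 0) :
    (∀ v i : V, 0 < b v i ↔ Relation.ReflTransGen E i v) ∧
    (∀ i j : V, i ≠ j → (fun v => b v i) ≠ (fun v => b v j)) ∧
    (∀ i v : V, E i v → cE i v = b v i / b i i) :=
  stmt16_general E httt cE cD sp hce hcDpos hsp b hb
end
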